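/- Let Ω be a nonempty open subset of ℝⁿ and let F be a Taylorian 1-field on Ω. Suppose there exists a nonempty set Ω′ with compact closure contained in Ω such that Γ¹(F;Ω′) = Γ¹(F;Ω). Then Γ¹(F;Ω) = Lip(Df;Ω). -/

import Mathlib

noncomputable section

open scoped RealInnerProductSpace

section GammaDefs

variable {H : Type*} [NormedAddCommGroup H] [InnerProductSpace ℝ H]

/-- Evaluation of the first-degree polynomial `F(x)` at `a`:
`F(x)(a) = f_x + ⟨D_xf, a - x⟩`. -/
def fieldEval (f : H → ℝ) (Df : H → H) (x a : H) : ℝ :=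
  f x + ⟪Df x, a - x⟫

/-- `Γ¹(F; x, y) = 2 · sup_{a} |F(x)(a) - F(y)(a)| / (‖x-a‖² + ‖y-a‖²)` for `x ≠ y`. -/
def gammaPair (f : H → ℝ) (Df : H → H) (x y : H) : ℝ :=
  ⨆ a : H, 2 * |fieldEval f Df x a - fieldEval f Df y a| / (‖x - a‖ ^ 2 + ‖y - a‖ ^ 2)

/-- The set of values `Γ¹(F; x, y)` for `x ≠ y` ranging over `S`. -/
def gammaVals (f : H → ℝ) (Df : H → H) (S : Set H) : Set ℝ :=
  {t | ∃ x ∈ S, ∃ y ∈ S, x ≠ y ∧ t = gammaPair f Df x y}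

/-- `Γ¹(F; S) = sup_{x ≠ y ∈ S} Γ¹(F; x, y)` (real supremum, `0` if `S` has at most one point). -/
def gammaOn (f : H → ℝ) (Df : H → H) (S : Set H) : ℝ :=
  sSup (gammaVals f Df S)

end GammaDefs

section LipDefs

variable {α β : Type*} [NormedAddCommGroup α] [NormedAddCommGroup β]

/-- The set of difference quotients `‖g x - g y‖ / ‖x - y‖`, `x ≠ y ∈ S`. -/
def lipVals (g : α → β) (S : Set α) : Set ℝ :=
  {t | ∃ x ∈ S, ∃ y ∈ S, x ≠ y ∧ t = ‖g x - g y‖ / ‖x - y‖}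

/-- `Lip(g; S) = sup_{x ≠ y ∈ S} ‖g x - g y‖ / ‖x - y‖` (real supremum). -/
def lipOn (g : α → β) (S : Set α) : ℝ :=
  sSup (lipVals g S)

end LipDefs

section PsiDefs

variable {H : Type*} [NormedAddCommGroup H] [InnerProductSpace ℝ H]

/-- `v_{a,b} = ½(D_af + D_bf) + (κ/2)(b - a)`. -/
def vab (Df : H → H) (κ : ℝ) (a b : H) : H :=
  (1 / 2 : ℝ) • (Df a + Df b) + (κ / 2) • (b - a)

/-- `α_{a,b}`. -/
def alphaab (f : H → ℝ) (Df : H → H) (κ : ℝ) (a b : H) : ℝ :=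
  2 * κ * (f a - f b) + κ * ⟪Df a + Df b, b - a⟫
    - 1 / 2 * ‖Df a - Df b‖ ^ 2 + κ ^ 2 / 2 * ‖a - b‖ ^ 2

/-- `β_{a,b}(x)`. -/
def betaab (Df : H → H) (κ : ℝ) (a b x : H) : ℝ :=
  ‖(1 / 2 : ℝ) • (Df a - Df b) + (κ / 2) • ((2 : ℝ) • x - a - b)‖ ^ 2

/-- `r_{a,b}(x) = √(α_{a,b} + β_{a,b}(x))`. -/
def rab (f : H → ℝ) (Df : H → H) (κ : ℝ) (a b x : H) : ℝ :=
  Real.sqrt (alphaab f Df κ a b + betaab Df κ a b x)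

/-- `Λ_x = {v : ‖v - v_{a,b}‖ ≤ r_{a,b}(x) for all a, b ∈ Ω}`. -/
def Lambda (f : H → ℝ) (Df : H → H) (κ : ℝ) (Ω : Set H) (x : H) : Set H :=
  {v | ∀ a ∈ Ω, ∀ b ∈ Ω, ‖v - vab Df κ a b‖ ≤ rab f Df κ a b x}

/-- `Ψ⁺(F, x, a, v)`. -/
def PsiPlus (f : H → ℝ) (Df : H → H) (κ : ℝ) (x a v : H) : ℝ :=
  f a + 1 / 2 * ⟪Df a + v, x - a⟫ + κ / 4 * ‖a - x‖ ^ 2 - 1 / (4 * κ) * ‖Df a - v‖ ^ 2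

/-- `Ψ⁻(F, x, a, v)`. -/
def PsiMinus (f : H → ℝ) (Df : H → H) (κ : ℝ) (x a v : H) : ℝ :=
  f a + 1 / 2 * ⟪Df a + v, x - a⟫ - κ / 4 * ‖a - x‖ ^ 2 + 1 / (4 * κ) * ‖Df a - v‖ ^ 2

/-- `inf_{a ∈ Ω} Ψ⁺(F, x, a, v)`. -/
def infPsiPlus (f : H → ℝ) (Df : H → H) (κ : ℝ) (Ω : Set H) (x v : H) : ℝ :=
  sInf {t | ∃ a ∈ Ω, t = PsiPlus f Df κ x a v}

/-- `sup_{a ∈ Ω} Ψ⁻(F, x, a, v)`. -/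
def supPsiMinus (f : H → ℝ) (Df : H → H) (κ : ℝ) (Ω : Set H) (x v : H) : ℝ :=
  sSup {t | ∃ a ∈ Ω, t = PsiMinus f Df κ x a v}

/-- `u⁺(x) = sup_{v ∈ Λ_x} inf_{a ∈ Ω} Ψ⁺(F, x, a, v)`. -/
def uPlus (f : H → ℝ) (Df : H → H) (κ : ℝ) (Ω : Set H) (x : H) : ℝ :=
  sSup {t | ∃ v ∈ Lambda f Df κ Ω x, t = infPsiPlus f Df κ Ω x v}

/-- `u⁻(x) = inf_{v ∈ Λ_x} sup_{a ∈ Ω} Ψ⁻(F, x, a, v)`. -/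
def uMinus (f : H → ℝ) (Df : H → H) (κ : ℝ) (Ω : Set H) (x : H) : ℝ :=
  sInf {t | ∃ v ∈ Lambda f Df κ Ω x, t = supPsiMinus f Df κ Ω x v}

/-- `(g, Dg)` is a minimal Lipschitz extension of the 1-field `(f, Df)` of domain `Ω` to `H`. -/
def IsMLE (f : H → ℝ) (Df : H → H) (Ω : Set H) (g : H → ℝ) (Dg : H → H) : Prop :=
  (∀ x ∈ Ω, g x = f x ∧ Dg x = Df x) ∧ gammaOn g Dg Set.univ = gammaOn f Df Ω

/-- Over extremal MLE. -/
def IsOverExtremal (f : H → ℝ) (Df : H → H) (Ω : Set H) (g₁ : H → ℝ) (Dg₁ : H → H) : Prop :=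
  IsMLE f Df Ω g₁ Dg₁ ∧ ∀ g Dg, IsMLE f Df Ω g Dg → ∀ x, g x ≤ g₁ x

/-- Under extremal MLE. -/
def IsUnderExtremal (f : H → ℝ) (Df : H → H) (Ω : Set H) (g₂ : H → ℝ) (Dg₂ : H → H) : Prop :=
  IsMLE f Df Ω g₂ Dg₂ ∧ ∀ g Dg, IsMLE f Df Ω g Dg → ∀ x, g₂ x ≤ g x

/-- Absolutely minimal Lipschitz extension. -/
def IsAMLE (f : H → ℝ) (Df : H → H) (Ω : Set H) (g : H → ℝ) (Dg : H → H) : Prop :=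
  IsMLE f Df Ω g Dg ∧
    ∀ V : Set H, V.Nonempty → IsOpen V → Bornology.IsBounded V → closure V ⊆ Ωᶜ →
      gammaOn g Dg V = gammaOn g Dg (frontier V)

end PsiDefs

/-!
Write `K = Γ¹(F;Ω)`, `L = Lip(Df;Ω)` and `N(x,y,a) = F(x)(a) - F(y)(a)`. Testing `N(x,y,·)` at
`m ± v`, where `m` is the midpoint of `x, y` and `v` is parallel to `D_xf - D_yf` with
`‖v‖ = ‖x - y‖/2`, gives `L ≤ K`.

For `K ≤ L`, take `x, y ∈ Ω'` and `a` with `2|N(x,y,a)| ≥ (K - η)(‖x - a‖² + ‖y - a‖²)`, `x` the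
endpoint farther from `a`, and move `x` a fraction `s` of the way to `a`, to `u`. In
`N(x,y,a) = (F(x)(u) - f(u)) + ⟨D_xf - D_uf, a - u⟩ + N(u,y,a)` the first and last terms are
controlled by `K`, which forces `‖D_xf - D_uf‖ ≥ (K - 2η/s)‖x - u‖`. Near-extremality keeps `a`
within `6 diam Ω'` of `x`, so a single `s > 0` puts every such `u` in a fixed thickening of `Ω'`
inside `Ω`; letting `η → 0` gives `K ≤ L`.
-/

lemma norm_sub_sq_le_two_mul {E : Type*} [SeminormedAddCommGroup E] (x y a : E) :
    ‖x - y‖ ^ 2 ≤ 2 * (‖x - a‖ ^ 2 + ‖y - a‖ ^ 2) := by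
  have h := norm_sub_le_norm_sub_add_norm_sub x a y
  rw [norm_sub_rev a y] at h
  nlinarith [norm_nonneg (x - y), sq_nonneg (‖x - a‖ - ‖y - a‖)]

lemma lipOn_nonneg {α β : Type*} [NormedAddCommGroup α] [NormedAddCommGroup β] (g : α → β)
    (S : Set α) : 0 ≤ lipOn g S :=
  Real.sSup_nonneg <| by
    rintro _ ⟨x, -, y, -, -, rfl⟩
    positivity

section Taylorian

variable {H : Type*} [NormedAddCommGroup H] [InnerProductSpace ℝ H]

lemma norm_sub_midpoint_add_sq (x y v : H) :
    ‖x - ((1 / 2 : ℝ) • (x + y) + v)‖ ^ 2 + ‖y - ((1 / 2 : ℝ) • (x + y) + v)‖ ^ 2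
      = ‖x - y‖ ^ 2 / 2 + 2 * ‖v‖ ^ 2 := by
  simp only [← real_inner_self_eq_norm_sq, inner_sub_left, inner_sub_right, inner_add_left,
    inner_add_right, real_inner_smul_left, real_inner_smul_right, real_inner_comm x y,
    real_inner_comm x v, real_inner_comm y v]
  ring

variable (f : H → ℝ) (Df : H → H)

def gammaQuot (x y a : H) : ℝ :=
  2 * |fieldEval f Df x a - fieldEval f Df y a| / (‖x - a‖ ^ 2 + ‖y - a‖ ^ 2)

@[simp]
lemma fieldEval_self (x : H) : fieldEval f Df x x = f x := by
  simp [fieldEval]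

lemma fieldEval_sub_fieldEval (x y a : H) :
    fieldEval f Df x a - fieldEval f Df y a
      = fieldEval f Df x y - f y + ⟪Df x - Df y, a - y⟫ := by
  simp only [fieldEval, inner_sub_left, inner_sub_right]
  ring

lemma gammaQuot_nonneg (x y a : H) : 0 ≤ gammaQuot f Df x y a := by
  unfold gammaQuot
  positivity

lemma gammaQuot_le {x y : H} (hxy : x ≠ y) (a : H) :
    gammaQuot f Df x y a
      ≤ 4 * |fieldEval f Df x y - f y| / ‖x - y‖ ^ 2 + 4 * ‖Df x - Df y‖ / ‖x - y‖ := by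
  have hd : 0 < ‖x - y‖ := norm_sub_pos_iff.2 hxy
  have hdD := norm_sub_sq_le_two_mul x y a
  have hD : 0 < ‖x - a‖ ^ 2 + ‖y - a‖ ^ 2 := by nlinarith
  set c := |fieldEval f Df x y - f y|
  set b := ‖Df x - Df y‖
  have hN : |fieldEval f Df x a - fieldEval f Df y a| ≤ c + b * ‖y - a‖ := by
    rw [fieldEval_sub_fieldEval, norm_sub_rev y a]
    exact (abs_add_le _ _).trans (add_le_add le_rfl (abs_real_inner_le_norm _ _))
  have hc : 2 * c ≤ 4 * c / ‖x - y‖ ^ 2 * (‖x - a‖ ^ 2 + ‖y - a‖ ^ 2) := by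
    rw [div_mul_eq_mul_div, le_div_iff₀ (by positivity)]
    nlinarith [abs_nonneg (fieldEval f Df x y - f y)]
  -- `‖y - a‖ ‖x - y‖ ≤ ‖y - a‖² + ‖x - y‖²/4 ≤ 2 (‖x - a‖² + ‖y - a‖²)`
  have hb : 2 * (b * ‖y - a‖) ≤ 4 * b / ‖x - y‖ * (‖x - a‖ ^ 2 + ‖y - a‖ ^ 2) := by
    rw [div_mul_eq_mul_div, le_div_iff₀ hd]
    nlinarith [mul_nonneg (norm_nonneg (Df x - Df y)) (sq_nonneg (‖y - a‖ - ‖x - y‖ / 2)),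
      norm_nonneg (Df x - Df y), sq_nonneg ‖x - a‖]
  rw [gammaQuot, div_le_iff₀ hD]
  nlinarith

lemma bddAbove_range_gammaQuot {x y : H} (hxy : x ≠ y) :
    BddAbove (Set.range (gammaQuot f Df x y)) :=
  ⟨_, Set.forall_mem_range.2 (gammaQuot_le f Df hxy)⟩

lemma gammaOn_nonneg (S : Set H) : 0 ≤ gammaOn f Df S :=
  Real.sSup_nonneg <| by
    rintro _ ⟨x, -, y, -, -, rfl⟩
    exact Real.iSup_nonneg (gammaQuot_nonneg f Df x y)

lemma exists_lt_two_mul_abs_fieldEval_sub {S : Set H} (hK : 0 < gammaOn f Df S) {η : ℝ}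
    (hη : 0 < η) :
    ∃ x ∈ S, ∃ y ∈ S, ∃ a : H, x ≠ y ∧ ‖y - a‖ ≤ ‖x - a‖ ∧
      (gammaOn f Df S - η) * (‖x - a‖ ^ 2 + ‖y - a‖ ^ 2)
        < 2 * |fieldEval f Df x a - fieldEval f Df y a| := by
  have hne : (gammaVals f Df S).Nonempty := by
    by_contra h
    rw [Set.not_nonempty_iff_eq_empty] at h
    simp [gammaOn, h] at hK
  obtain ⟨_, ⟨x, hx, y, hy, hxy, rfl⟩, hxyK⟩ :=
    exists_lt_of_lt_csSup hne (sub_lt_self (gammaOn f Df S) hη)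
  have : Nonempty H := ⟨x⟩
  obtain ⟨a, ha⟩ := exists_lt_of_lt_ciSup hxyK
  have hD : 0 < ‖x - a‖ ^ 2 + ‖y - a‖ ^ 2 := by
    nlinarith [norm_sub_sq_le_two_mul x y a, norm_sub_pos_iff.2 hxy]
  have hlt := (lt_div_iff₀ hD).1 ha
  rcases le_total ‖y - a‖ ‖x - a‖ with hfar | hfar
  · exact ⟨x, hx, y, hy, a, hxy, hfar, hlt⟩
  · refine ⟨y, hy, x, hx, a, hxy.symm, hfar, ?_⟩
    rwa [add_comm, abs_sub_comm]

variable {f Df} {Ω : Set H}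

lemma gammaQuot_le_gammaOn (hTay : BddAbove (gammaVals f Df Ω)) {x y : H} (hx : x ∈ Ω)
    (hy : y ∈ Ω) (hxy : x ≠ y) (a : H) :
    gammaQuot f Df x y a ≤ gammaOn f Df Ω :=
  (le_ciSup (bddAbove_range_gammaQuot f Df hxy) a).trans (le_csSup hTay ⟨x, hx, y, hy, hxy, rfl⟩)

lemma two_mul_abs_fieldEval_sub_le (hTay : BddAbove (gammaVals f Df Ω)) {x y : H} (hx : x ∈ Ω)
    (hy : y ∈ Ω) (a : H) :
    2 * |fieldEval f Df x a - fieldEval f Df y a|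
      ≤ gammaOn f Df Ω * (‖x - a‖ ^ 2 + ‖y - a‖ ^ 2) := by
  rcases eq_or_ne x y with rfl | hxy
  · simpa using mul_nonneg (gammaOn_nonneg f Df Ω)
      (add_nonneg (sq_nonneg ‖x - a‖) (sq_nonneg ‖x - a‖))
  · have hD : 0 < ‖x - a‖ ^ 2 + ‖y - a‖ ^ 2 := by
      nlinarith [norm_sub_sq_le_two_mul x y a, norm_sub_pos_iff.2 hxy]
    rw [← div_le_iff₀ hD]
    exact gammaQuot_le_gammaOn hTay hx hy hxy a

lemma two_mul_abs_fieldEval_sub_apply_le (hTay : BddAbove (gammaVals f Df Ω)) {x y : H}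
    (hx : x ∈ Ω) (hy : y ∈ Ω) :
    2 * |fieldEval f Df x y - f y| ≤ gammaOn f Df Ω * ‖x - y‖ ^ 2 := by
  simpa using two_mul_abs_fieldEval_sub_le hTay hx hy y

lemma norm_sub_le_gammaOn_mul (hTay : BddAbove (gammaVals f Df Ω)) {x y : H} (hx : x ∈ Ω)
    (hy : y ∈ Ω) :
    ‖Df x - Df y‖ ≤ gammaOn f Df Ω * ‖x - y‖ := by
  set w := Df x - Df y
  rcases eq_or_ne w 0 with hw | hw
  · rw [hw, norm_zero]
    exact mul_nonneg (gammaOn_nonneg f Df Ω) (norm_nonneg _)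
  have hw' : 0 < ‖w‖ := norm_pos_iff.2 hw
  set d := ‖x - y‖
  set m : H := (1 / 2 : ℝ) • (x + y)
  set v : H := (d / (2 * ‖w‖)) • w
  have hwv : ⟪w, v⟫ = d * ‖w‖ / 2 := by
    rw [real_inner_smul_right, real_inner_self_eq_norm_sq]
    field_simp
  have hv : ‖v‖ = d / 2 := by
    rw [norm_smul, Real.norm_of_nonneg (by positivity)]
    field_simp
  have hdiff : (fieldEval f Df x (m + v) - fieldEval f Df y (m + v))
      - (fieldEval f Df x (m + -v) - fieldEval f Df y (m + -v)) = 2 * ⟪w, v⟫ := by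
    rw [fieldEval_sub_fieldEval, fieldEval_sub_fieldEval]
    simp only [inner_sub_right, inner_add_right, inner_neg_right]
    ring
  have hplus := two_mul_abs_fieldEval_sub_le hTay hx hy (m + v)
  have hminus := two_mul_abs_fieldEval_sub_le hTay hx hy (m + -v)
  rw [norm_sub_midpoint_add_sq] at hplus hminus
  rw [norm_neg, hv] at hminus
  rw [hv] at hplus
  have hK := gammaOn_nonneg f Df Ω
  have hd : 0 < d := by
    refine norm_sub_pos_iff.2 fun hxy => hw ?_
    simp [w, hxy]
  nlinarith [le_abs_self (fieldEval f Df x (m + v) - fieldEval f Df y (m + v)),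
    neg_abs_le (fieldEval f Df x (m + -v) - fieldEval f Df y (m + -v))]

lemma gammaOn_mem_upperBounds_lipVals (hTay : BddAbove (gammaVals f Df Ω)) :
    gammaOn f Df Ω ∈ upperBounds (lipVals Df Ω) := by
  rintro _ ⟨x, hx, y, hy, hxy, rfl⟩
  rw [div_le_iff₀ (norm_sub_pos_iff.2 hxy)]
  exact norm_sub_le_gammaOn_mul hTay hx hy

lemma lipOn_le_gammaOn (hTay : BddAbove (gammaVals f Df Ω)) : lipOn Df Ω ≤ gammaOn f Df Ω :=
  Real.sSup_le (gammaOn_mem_upperBounds_lipVals hTay) (gammaOn_nonneg f Df Ω)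

lemma norm_sub_le_lipOn_mul (hTay : BddAbove (gammaVals f Df Ω)) {x y : H} (hx : x ∈ Ω)
    (hy : y ∈ Ω) :
    ‖Df x - Df y‖ ≤ lipOn Df Ω * ‖x - y‖ := by
  rcases eq_or_ne x y with rfl | hxy
  · simp
  rw [← div_le_iff₀ (norm_sub_pos_iff.2 hxy)]
  exact le_csSup ⟨_, gammaOn_mem_upperBounds_lipVals hTay⟩ ⟨x, hx, y, hy, hxy, rfl⟩

lemma two_mul_abs_fieldEval_sub_add_le (hTay : BddAbove (gammaVals f Df Ω)) {x y a : H} {s : ℝ}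
    (hx : x ∈ Ω) (hy : y ∈ Ω) (hs : s ≤ 1) (hu : x + s • (a - x) ∈ Ω) :
    2 * |fieldEval f Df x a - fieldEval f Df y a|
        + 2 * (1 - s) * ‖x - a‖
          * (gammaOn f Df Ω * s * ‖x - a‖ - ‖Df x - Df (x + s • (a - x))‖)
      ≤ gammaOn f Df Ω * (‖x - a‖ ^ 2 + ‖y - a‖ ^ 2) := by
  set u := x + s • (a - x)
  have hxu : ‖x - u‖ ^ 2 = s ^ 2 * ‖x - a‖ ^ 2 := by
    rw [show x - u = -(s • (a - x)) by simp [u], norm_neg, norm_smul, mul_pow, Real.norm_eq_abs,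
      sq_abs, norm_sub_rev]
  have hau : a - u = (1 - s) • (a - x) := by
    simp only [u, sub_smul, one_smul]
    abel
  have hua : ‖u - a‖ = (1 - s) * ‖x - a‖ := by
    rw [norm_sub_rev, hau, norm_smul, Real.norm_of_nonneg (sub_nonneg.2 hs), norm_sub_rev]
  have hsplit : fieldEval f Df x a - fieldEval f Df y a
      = (fieldEval f Df x u - f u + ⟪Df x - Df u, a - u⟫)
        + (fieldEval f Df u a - fieldEval f Df y a) := by
    rw [← fieldEval_sub_fieldEval]
    ring
  have htaylor := two_mul_abs_fieldEval_sub_apply_le hTay hx hu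
  have hinner : |⟪Df x - Df u, a - u⟫| ≤ ‖Df x - Df u‖ * ((1 - s) * ‖x - a‖) := by
    rw [← hua, norm_sub_rev u a]
    exact abs_real_inner_le_norm _ _
  have huy := two_mul_abs_fieldEval_sub_le hTay hu hy a
  rw [hua] at huy
  rw [hxu] at htaylor
  rw [hsplit]
  have habs := abs_add_three (fieldEval f Df x u - f u) ⟪Df x - Df u, a - u⟫
    (fieldEval f Df u a - fieldEval f Df y a)
  nlinarith

lemma norm_sub_le_five_mul_of_le (hTay : BddAbove (gammaVals f Df Ω)) {x y : H} (hx : x ∈ Ω)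
    (hy : y ∈ Ω) (hK : 0 < gammaOn f Df Ω) {a : H}
    (ha : gammaOn f Df Ω * (‖x - a‖ ^ 2 + ‖y - a‖ ^ 2)
      ≤ 4 * |fieldEval f Df x a - fieldEval f Df y a|) :
    ‖y - a‖ ≤ 5 * ‖x - y‖ := by
  set K := gammaOn f Df Ω
  have hN : |fieldEval f Df x a - fieldEval f Df y a|
      ≤ |fieldEval f Df x y - f y| + ‖Df x - Df y‖ * ‖y - a‖ := by
    rw [fieldEval_sub_fieldEval, norm_sub_rev y a]
    exact (abs_add_le _ _).trans (add_le_add le_rfl (abs_real_inner_le_norm _ _))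
  have htaylor := two_mul_abs_fieldEval_sub_apply_le hTay hx hy
  have hlip := norm_sub_le_gammaOn_mul hTay hx hy
  -- the positive root of `t² - 4t - 2` is `2 + √6 < 5`
  have hquad : K * (‖y - a‖ ^ 2 - 4 * ‖x - y‖ * ‖y - a‖ - 2 * ‖x - y‖ ^ 2) ≤ 0 := by
    nlinarith [mul_le_mul_of_nonneg_right hlip (norm_nonneg (y - a)), sq_nonneg ‖x - a‖]
  by_contra! h
  have hpos : 0 < ‖y - a‖ ^ 2 - 4 * ‖x - y‖ * ‖y - a‖ - 2 * ‖x - y‖ ^ 2 := by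
    nlinarith [mul_nonneg (norm_nonneg (x - y)) (sub_nonneg.2 h.le), norm_nonneg (x - y)]
  linarith [mul_pos hK hpos]

lemma mul_gammaOn_sub_lipOn_le (hTay : BddAbove (gammaVals f Df Ω)) {x y a : H} {s η : ℝ}
    (hx : x ∈ Ω) (hy : y ∈ Ω) (hxy : x ≠ y) (hfar : ‖y - a‖ ≤ ‖x - a‖) (hs₀ : 0 ≤ s)
    (hs : s ≤ 1 / 2) (hu : x + s • (a - x) ∈ Ω) (hη : 0 ≤ η)
    (hN : (gammaOn f Df Ω - η) * (‖x - a‖ ^ 2 + ‖y - a‖ ^ 2)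
      ≤ 2 * |fieldEval f Df x a - fieldEval f Df y a|) :
    s * (gammaOn f Df Ω - lipOn Df Ω) ≤ 2 * η := by
  have hkey := two_mul_abs_fieldEval_sub_add_le hTay hx hy (by linarith) hu
  have hlip := norm_sub_le_lipOn_mul hTay hx hu
  rw [show x - (x + s • (a - x)) = -(s • (a - x)) by abel, norm_neg, norm_smul,
    Real.norm_of_nonneg hs₀, norm_sub_rev a x] at hlip
  set K := gammaOn f Df Ω
  set L := lipOn Df Ω
  set ρ := ‖x - a‖
  have hρ : 0 < ρ := by
    have h := norm_sub_le_norm_sub_add_norm_sub x a y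
    rw [norm_sub_rev a y] at h
    linarith [norm_sub_pos_iff.2 hxy]
  have hLK : L ≤ K := lipOn_le_gammaOn hTay
  have hya : ‖y - a‖ ^ 2 ≤ ρ ^ 2 := pow_le_pow_left₀ (norm_nonneg _) hfar 2
  have hgain : 2 * (1 - s) * ρ * (s * ρ * (K - L))
      ≤ 2 * (1 - s) * ρ * (K * s * ρ - ‖Df x - Df (x + s • (a - x))‖) :=
    mul_le_mul_of_nonneg_left (by linarith) (by nlinarith)
  have hloss : (1 - s) * s * (K - L) * ρ ^ 2 ≤ η * ρ ^ 2 := by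
    nlinarith [mul_le_mul_of_nonneg_left hya hη]
  have h := le_of_mul_le_mul_right hloss (by positivity)
  nlinarith [mul_nonneg hs₀ (sub_nonneg.2 hLK)]

end Taylorian

theorem gammaOn_eq_lipOn_of_thickening_subset {H : Type*} [NormedAddCommGroup H]
    [InnerProductSpace ℝ H] {f : H → ℝ} {Df : H → H} {Ω Ω' : Set H}
    (hTay : BddAbove (gammaVals f Df Ω)) (hbdd : Bornology.IsBounded Ω') {r : ℝ} (hr : 0 < r)
    (hthick : Metric.thickening r Ω' ⊆ Ω)
    (heq : gammaOn f Df Ω' = gammaOn f Df Ω) :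
    gammaOn f Df Ω = lipOn Df Ω := by
  set K := gammaOn f Df Ω
  set L := lipOn Df Ω
  refine le_antisymm ?_ (lipOn_le_gammaOn hTay)
  rcases le_or_gt K 0 with hK | hK
  · exact hK.trans (lipOn_nonneg Df Ω)
  set R := Metric.diam Ω'
  have hR : 0 ≤ R := Metric.diam_nonneg
  -- every near-extremal `a` lies within `6 R` of `x`, so moving `x` by `s ρ < r` stays in `Ω`
  set s := r / (2 * (6 * R + r))
  have hs₀ : 0 < s := by positivity
  have hs : s ≤ 1 / 2 := by
    rw [div_le_iff₀ (by positivity)]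
    linarith
  have hgap : ∀ η, 0 < η → η ≤ K / 2 → s * (K - L) ≤ 2 * η := by
    intro η hη hηK
    obtain ⟨x, hx, y, hy, a, hxy, hfar, hN⟩ :=
      exists_lt_two_mul_abs_fieldEval_sub f Df (heq ▸ hK) hη
    rw [heq] at hN
    have hxΩ := hthick (Metric.self_subset_thickening hr Ω' hx)
    have hyΩ := hthick (Metric.self_subset_thickening hr Ω' hy)
    have hya : ‖y - a‖ ≤ 5 * ‖x - y‖ := by
      refine norm_sub_le_five_mul_of_le hTay hxΩ hyΩ hK ?_
      nlinarith [sq_nonneg ‖x - a‖, sq_nonneg ‖y - a‖]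
    have hxy' : ‖x - y‖ ≤ R := by
      rw [← dist_eq_norm]
      exact Metric.dist_le_diam_of_mem hbdd hx hy
    have hxa : ‖x - a‖ ≤ 6 * R := by
      linarith [norm_sub_le_norm_sub_add_norm_sub x y a]
    have hu : x + s • (a - x) ∈ Ω := by
      refine hthick (Metric.ball_subset_thickening hx r ?_)
      rw [Metric.mem_ball, dist_eq_norm, add_sub_cancel_left, norm_smul,
        Real.norm_of_nonneg hs₀.le, norm_sub_rev]
      calc s * ‖x - a‖ ≤ s * (6 * R) := by gcongr
        _ < r := by
          rw [div_mul_eq_mul_div, div_lt_iff₀ (by positivity)]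
          nlinarith
    exact mul_gammaOn_sub_lipOn_le hTay hxΩ hyΩ hxy hfar hs₀.le hs hu hη.le hN.le
  by_contra! hLK
  have hgap' := hgap (min (K / 2) (s * (K - L) / 4)) (by positivity) (min_le_left _ _)
  have := min_le_right (K / 2) (s * (K - L) / 4)
  nlinarith [mul_pos hs₀ (sub_pos.2 hLK)]

theorem stmt_1_general {n : ℕ} (Ω : Set (EuclideanSpace ℝ (Fin n)))
    (hΩop : IsOpen Ω)
    (f : EuclideanSpace ℝ (Fin n) → ℝ)
    (Df : EuclideanSpace ℝ (Fin n) → EuclideanSpace ℝ (Fin n))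
    (hTay : BddAbove (gammaVals f Df Ω))
    (Ω' : Set (EuclideanSpace ℝ (Fin n)))
    (hcpt : IsCompact (closure Ω')) (hsub : closure Ω' ⊆ Ω)
    (heq : gammaOn f Df Ω' = gammaOn f Df Ω) :
    gammaOn f Df Ω = lipOn Df Ω := by
  obtain ⟨r, hr, hthick⟩ := hcpt.exists_thickening_subset_open hΩop hsub
  exact gammaOn_eq_lipOn_of_thickening_subset hTay (hcpt.isBounded.subset subset_closure) hr
    ((Metric.thickening_subset_of_subset r subset_closure).trans hthick) heq

/-- If `Ω` is a nonempty open subset of `ℝⁿ`, `F = (f, Df)` is a Taylorian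
1-field on `Ω`, and there is a nonempty `Ω'` with compact closure contained in `Ω` such that
`Γ¹(F;Ω') = Γ¹(F;Ω)`, then `Γ¹(F;Ω) = Lip(Df;Ω)`. -/
theorem stmt_1 {n : ℕ} (hn : 1 ≤ n) (Ω : Set (EuclideanSpace ℝ (Fin n)))
    (hΩne : Ω.Nonempty) (hΩop : IsOpen Ω)
    (f : EuclideanSpace ℝ (Fin n) → ℝ)
    (Df : EuclideanSpace ℝ (Fin n) → EuclideanSpace ℝ (Fin n))
    (hTay : BddAbove (gammaVals f Df Ω))
    (Ω' : Set (EuclideanSpace ℝ (Fin n))) (hΩ'ne : Ω'.Nonempty)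
    (hcpt : IsCompact (closure Ω')) (hsub : closure Ω' ⊆ Ω)
    (heq : gammaOn f Df Ω' = gammaOn f Df Ω) :
    gammaOn f Df Ω = lipOn Df Ω :=
  stmt_1_general Ω hΩop f Df hTay Ω' hcpt hsub heq
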